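/- Let f = Σ_{i=0}^d a_i X^i ∈ ℝ⁺[X] of degree d, with f = Σ_{i=1}^k Π_{j=1}^m f_{i,j} where m ≥ 2 and each f_{i,j} ∈ ℝ⁺[X] has at most t nonzero monomials. If a_i^2 > d^{2d} a_{i-1} a_{i+1} for all i ∈ {1,...,d-1}, then d ≤ k·m·t. -/

import Mathlib

/-!
Write `a_n` for the coefficients of `f` and `K = k t^m`. Expanding the products, every `a_n`
with `1 ≤ n ≤ d` is at most `K` times a single term `∏_j (F i j).coeff (τ_j)` with
`∑_j τ_j = n`. If two degrees `n ≤ n'` choose the same summand `i` but `τ_{j₀} > τ'_{j₀}`,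
exchanging these two exponents produces terms of degrees `q < n ≤ n' < p`, `q + p = n + n'`,
with the same product of coefficients, so `a_n a_{n'} ≤ K² a_q a_p`. Strong log-concavity
gives `d^{2d} a_q a_p ≤ a_n a_{n'}`, which is impossible once `d > kmt`, since then
`K² < d^{2d}`. So for each `i` the exponent vectors form a strictly increasing chain in
`∏_j supp (F i j)`, which has at most `mt` elements, and `d ≤ kmt` follows.
-/

open Polynomial Finset

namespace Finset

theorem exists_sum_le_card_mul {α R : Type*} [CommSemiring R] [LinearOrder R]
    [IsOrderedRing R] {s : Finset α} (hs : s.Nonempty) (g : α → R) :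
    ∃ x ∈ s, ∑ y ∈ s, g y ≤ #s * g x := by
  obtain ⟨x, hx, hmax⟩ := s.exists_max_image g hs
  exact ⟨x, hx, (sum_le_card_nsmul s g (g x) hmax).trans_eq (nsmul_eq_mul _ _)⟩

@[to_additive]
theorem prod_mul_prod_update_swap {ι β M : Type*} [Fintype ι] [DecidableEq ι] [CommMonoid M]
    (g : ι → β → M) (τ τ' : ι → β) (j₀ : ι) :
    (∏ j, g j (Function.update τ j₀ (τ' j₀) j)) * ∏ j, g j (Function.update τ' j₀ (τ j₀) j) =
      (∏ j, g j (τ j)) * ∏ j, g j (τ' j) := by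
  rw [← prod_mul_distrib, ← prod_mul_distrib]
  refine prod_congr rfl fun j _ => ?_
  by_cases hj : j = j₀
  · subst hj
    simp [mul_comm]
  · simp [Function.update_of_ne hj]

theorem card_le_sum_card_of_strictMonoOn {α ι β : Type*} [LinearOrder α] [Fintype ι]
    [Nonempty ι] [LinearOrder β] {B : Finset α} {S : ι → Finset β} {T : α → ι → β}
    (hT : StrictMonoOn T B) (hS : ∀ n ∈ B, ∀ j, T n j ∈ S j) : #B ≤ ∑ j, #(S j) := by
  let φ : α → ℕ := fun n => ∑ j, #{v ∈ S j | v ≤ T n j}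
  have hφ : StrictMonoOn φ B := by
    intro n hn n' hn' hlt
    obtain ⟨hle, j₁, hj₁⟩ := Pi.lt_def.1 (hT hn hn' hlt)
    have hsub : ∀ j, {v ∈ S j | v ≤ T n j} ⊆ {v ∈ S j | v ≤ T n' j} := fun j v hv => by
      simp only [mem_filter] at hv ⊢
      exact ⟨hv.1, hv.2.trans (hle j)⟩
    refine sum_lt_sum (fun j _ => card_le_card (hsub j)) ⟨j₁, mem_univ _, card_lt_card ?_⟩
    rw [ssubset_iff_of_subset (hsub j₁)]
    exact ⟨T n' j₁, mem_filter.2 ⟨hS n' hn' j₁, le_rfl⟩, fun h => (mem_filter.1 h).2.not_gt hj₁⟩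
  have hmaps : ∀ n ∈ B, φ n ∈ Icc 1 (∑ j, #(S j)) := fun n hn => by
    obtain ⟨j₀⟩ := ‹Nonempty ι›
    refine mem_Icc.2 ⟨?_, sum_le_sum fun j _ => card_filter_le _ _⟩
    calc 1 ≤ #{v ∈ S j₀ | v ≤ T n j₀} := card_pos.2 ⟨T n j₀, mem_filter.2 ⟨hS n hn j₀, le_rfl⟩⟩
      _ ≤ φ n := single_le_sum (f := fun j => #{v ∈ S j | v ≤ T n j}) (by simp) (mem_univ j₀)
  simpa using card_le_card_of_injOn φ hmaps hφ.injOn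

theorem card_le_sum_sum_card_of_fibers {α κ ι β : Type*} [LinearOrder α] [Fintype κ]
    [DecidableEq κ] [Fintype ι] [Nonempty ι] [LinearOrder β] {s : Finset α} {I : α → κ}
    {S : κ → ι → Finset β} {T : α → ι → β} (hT : ∀ i, StrictMonoOn T (s.filter (I · = i)))
    (hS : ∀ n ∈ s, ∀ j, T n j ∈ S (I n) j) : #s ≤ ∑ i, ∑ j, #(S i j) := by
  rw [card_eq_sum_card_fiberwise fun n _ => mem_univ (I n)]
  refine sum_le_sum fun i _ => card_le_sum_card_of_strictMonoOn (hT i) fun n hn j => ?_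
  obtain ⟨hns, rfl⟩ := mem_filter.1 hn
  exact hS n hns j

end Finset

namespace Polynomial

variable {R ι : Type*} [Fintype ι] [DecidableEq ι]

theorem coeff_prod_eq_sum_piFinset [CommSemiring R] (F : ι → R[X]) (n : ℕ) :
    (∏ j, F j).coeff n =
      ∑ τ ∈ Fintype.piFinset (fun j => (F j).support) with ∑ j, τ j = n,
        ∏ j, (F j).coeff (τ j) := by
  conv_lhs => rw [Finset.prod_congr rfl fun j _ => as_sum_support_C_mul_X_pow (F j),
    prod_univ_sum, finsetSum_coeff]
  rw [sum_filter]
  refine sum_congr rfl fun τ _ => ?_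
  rw [prod_mul_distrib, ← map_prod, prod_pow_eq_pow_sum, coeff_C_mul_X_pow]
  exact if_congr eq_comm rfl rfl

section OrderedSemiring

variable [CommSemiring R] [PartialOrder R] [IsOrderedRing R]

theorem coeff_prod_nonneg {F : ι → R[X]} (hF : ∀ j n, 0 ≤ (F j).coeff n) (n : ℕ) :
    0 ≤ (∏ j, F j).coeff n := by
  rw [coeff_prod_eq_sum_piFinset]
  exact sum_nonneg fun σ _ => prod_nonneg fun j _ => hF j _

theorem prod_coeff_le_coeff_prod {F : ι → R[X]} (hF : ∀ j n, 0 ≤ (F j).coeff n) (τ : ι → ℕ) :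
    ∏ j, (F j).coeff (τ j) ≤ (∏ j, F j).coeff (∑ j, τ j) := by
  by_cases hτ : τ ∈ Fintype.piFinset fun j => (F j).support
  · rw [coeff_prod_eq_sum_piFinset]
    apply single_le_sum (f := fun σ : ι → ℕ => ∏ j, (F j).coeff (σ j))
    · exact fun σ _ => prod_nonneg fun j _ => hF j _
    · exact mem_filter.2 ⟨hτ, rfl⟩
  · obtain ⟨j, hj⟩ : ∃ j, (F j).coeff (τ j) = 0 := by simpa [Fintype.mem_piFinset] using hτ
    rw [prod_eq_zero (mem_univ j) hj]
    exact coeff_prod_nonneg hF _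

theorem prod_coeff_le_coeff_sum_prod {κ : Type*} [Fintype κ] {F : κ → ι → R[X]}
    (hF : ∀ i j n, 0 ≤ (F i j).coeff n) (i : κ) (τ : ι → ℕ) :
    ∏ j, (F i j).coeff (τ j) ≤ (∑ i, ∏ j, F i j).coeff (∑ j, τ j) := by
  rw [finsetSum_coeff]
  exact (prod_coeff_le_coeff_prod (hF i) τ).trans
    (single_le_sum (fun i _ => coeff_prod_nonneg (hF i) _) (mem_univ i))

end OrderedSemiring

section LinearOrderedSemiring

variable [CommSemiring R] [LinearOrder R] [IsStrictOrderedRing R] {t n : ℕ}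

theorem exists_coeff_prod_le {F : ι → R[X]} (hF : ∀ j n, 0 ≤ (F j).coeff n)
    (ht : ∀ j, #(F j).support ≤ t) (hn : 0 < (∏ j, F j).coeff n) :
    ∃ τ ∈ Fintype.piFinset (fun j => (F j).support), ∑ j, τ j = n ∧
      (∏ j, F j).coeff n ≤ t ^ Fintype.card ι * ∏ j, (F j).coeff (τ j) := by
  set P := Fintype.piFinset fun j => (F j).support
  have hP : #P ≤ t ^ Fintype.card ι := by
    rw [Fintype.card_piFinset, ← card_univ, ← prod_const]
    exact prod_le_prod' fun j _ => ht j
  rw [coeff_prod_eq_sum_piFinset] at hn ⊢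
  obtain ⟨τ, hτ, hmax⟩ :=
    exists_sum_le_card_mul (nonempty_of_sum_ne_zero hn.ne') fun τ => ∏ j, (F j).coeff (τ j)
  refine ⟨τ, (mem_filter.1 hτ).1, (mem_filter.1 hτ).2, hmax.trans ?_⟩
  refine mul_le_mul_of_nonneg_right ?_ (prod_nonneg fun j _ => hF j _)
  exact_mod_cast (card_filter_le _ _).trans hP

theorem exists_coeff_sum_prod_le {κ : Type*} [Fintype κ] {F : κ → ι → R[X]}
    (hF : ∀ i j n, 0 ≤ (F i j).coeff n) (ht : ∀ i j, #(F i j).support ≤ t)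
    (hn : 0 < (∑ i, ∏ j, F i j).coeff n) :
    ∃ i, ∃ τ ∈ Fintype.piFinset (fun j => (F i j).support), ∑ j, τ j = n ∧
      (∑ i, ∏ j, F i j).coeff n ≤
        Fintype.card κ * t ^ Fintype.card ι * ∏ j, (F i j).coeff (τ j) := by
  rw [finsetSum_coeff] at hn ⊢
  obtain ⟨i, -, hi⟩ :=
    exists_sum_le_card_mul (nonempty_of_sum_ne_zero hn.ne') fun i => (∏ j, F i j).coeff n
  have hin : 0 < (∏ j, F i j).coeff n :=
    pos_of_mul_pos_right (hn.trans_le hi) (Nat.cast_nonneg _)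
  obtain ⟨τ, hτ, hsum, hle⟩ := exists_coeff_prod_le (hF i) (ht i) hin
  refine ⟨i, τ, hτ, hsum, hi.trans ?_⟩
  rw [card_univ, mul_assoc]
  exact mul_le_mul_of_nonneg_left hle (Nat.cast_nonneg _)

end LinearOrderedSemiring

end Polynomial

/-- The paper's `a_i² > C a_{i-1} a_{i+1}` for `1 ≤ i ≤ d - 1`, shifted by one index. -/
def StronglyLogConcave (C : ℝ) (d : ℕ) (a : ℕ → ℝ) : Prop :=
  ∀ i, i + 2 ≤ d → C * (a i * a (i + 2)) < a (i + 1) ^ 2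

namespace StronglyLogConcave

variable {C : ℝ} {d : ℕ} {a : ℕ → ℝ}

theorem pos (h : StronglyLogConcave C d a) (hC : 0 ≤ C) (ha : ∀ i, 0 ≤ a i) {i : ℕ}
    (hi : i + 2 ≤ d) : 0 < a (i + 1) := by
  refine (ha _).lt_of_ne' fun h0 => ?_
  have := h i hi
  rw [h0] at this
  nlinarith [mul_nonneg hC (mul_nonneg (ha i) (ha (i + 2)))]

theorem coeff_pos {f : ℝ[X]} (hd : f.natDegree = d) (h : StronglyLogConcave C d f.coeff)
    (hC : 0 ≤ C) (hf : ∀ n, 0 ≤ f.coeff n) {n : ℕ} (hn : n ∈ Icc 1 d) : 0 < f.coeff n := by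
  obtain ⟨h1, h2⟩ := mem_Icc.1 hn
  rcases h2.lt_or_eq with h2 | rfl
  · obtain ⟨i, rfl⟩ : ∃ i, n = i + 1 := ⟨n - 1, by omega⟩
    exact h.pos hC hf (by omega)
  · refine (hf _).lt_of_ne' ?_
    rw [← hd, coeff_natDegree, leadingCoeff_ne_zero]
    rintro rfl
    simp at hd
    omega

theorem mul_le_mul_succ (h : StronglyLogConcave C d a) (hC : 1 ≤ C) (ha : ∀ i, 0 ≤ a i)
    {x y : ℕ} (hxy : x < y) (hy : y + 1 ≤ d) : C * (a x * a (y + 1)) ≤ a (x + 1) * a y := by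
  induction y, hxy using Nat.le_induction with
  | base => simpa [sq] using (h x hy).le
  | succ y hxy ih =>
    have hy0 : 0 < a y := by
      obtain ⟨z, rfl⟩ : ∃ z, y = z + 1 := ⟨y - 1, by omega⟩
      exact h.pos (by linarith) ha (by omega)
    have hy1 : 0 < a (y + 1) := h.pos (by linarith) ha (by omega)
    have hC2 : C * (a x * a (y + 2)) ≤ C * (C * (a x * a (y + 2))) :=
      le_mul_of_one_le_left (mul_nonneg (by linarith) (mul_nonneg (ha _) (ha _))) hC
    refine le_of_mul_le_mul_right ?_ (mul_pos hy0 hy1)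
    calc C * (a x * a (y + 1 + 1)) * (a y * a (y + 1))
        ≤ C * (C * (a x * a (y + 2))) * (a y * a (y + 1)) := by gcongr
      _ = C * (a x * a (y + 1)) * (C * (a y * a (y + 2))) := by ring
      _ ≤ a (x + 1) * a y * a (y + 1) ^ 2 :=
          mul_le_mul (ih (by omega)) (h y (by omega)).le
            (mul_nonneg (by linarith) (mul_nonneg (ha _) (ha _))) (mul_nonneg (ha _) (ha _))
      _ = a (x + 1) * a (y + 1) * (a y * a (y + 1)) := by ring

theorem mul_le_mul_of_add_eq (h : StronglyLogConcave C d a) (hC : 1 ≤ C) (ha : ∀ i, 0 ≤ a i)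
    {q n n' p : ℕ} (hqn : q < n) (hnn' : n ≤ n') (hsum : q + p = n + n') (hp : p ≤ d) :
    C * (a q * a p) ≤ a n * a n' := by
  induction n, hqn using Nat.le_induction generalizing n' with
  | base =>
    obtain rfl : p = n' + 1 := by omega
    exact h.mul_le_mul_succ hC ha (by omega) hp
  | succ n hqn ih =>
    calc C * (a q * a p) ≤ a n * a (n' + 1) := ih (by omega) (by omega)
      _ ≤ C * (a n * a (n' + 1)) := le_mul_of_one_le_left (mul_nonneg (ha _) (ha _)) hC
      _ ≤ a (n + 1) * a n' := h.mul_le_mul_succ hC ha (by omega) (by omega)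

variable {ι : Type*} [Fintype ι] [DecidableEq ι] {K : ℝ} {c : ι → ℕ → ℝ}

theorem le_of_sum_le {n n' : ℕ} {τ τ' : ι → ℕ} (h : StronglyLogConcave C d a) (hC : 1 ≤ C)
    (ha : ∀ i, 0 ≤ a i) (hvanish : ∀ p, d < p → a p = 0) (hc : ∀ j v, 0 ≤ c j v)
    (hca : ∀ σ : ι → ℕ, ∏ j, c j (σ j) ≤ a (∑ j, σ j)) (hKC : K ^ 2 < C)
    (hτ : ∑ j, τ j = n) (hn : 0 < a n) (hnK : a n ≤ K * ∏ j, c j (τ j))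
    (hτ' : ∑ j, τ' j = n') (hn' : 0 < a n') (hn'K : a n' ≤ K * ∏ j, c j (τ' j))
    (hnn' : n ≤ n') : τ ≤ τ' := by
  subst hτ hτ'
  intro j₀
  by_contra! hlt
  set σ := Function.update τ j₀ (τ' j₀)
  set σ' := Function.update τ' j₀ (τ j₀)
  have hc_prod : ∀ ρ : ι → ℕ, 0 ≤ ∏ j, c j (ρ j) := fun ρ => prod_nonneg fun j _ => hc j _
  have hσ : ∑ j, σ j < ∑ j, τ j := by
    refine sum_lt_sum (fun j _ => ?_) ⟨j₀, mem_univ _, by simpa [σ] using hlt⟩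
    by_cases hj : j = j₀
    · subst hj
      simpa [σ] using hlt.le
    · simp [σ, Function.update_of_ne hj]
  have hsum := sum_add_sum_update_swap (fun _ v => v) τ τ' j₀
  have hprod := prod_mul_prod_update_swap c τ τ' j₀
  have hswap : (∏ j, c j (σ j)) * ∏ j, c j (σ' j) ≤ a (∑ j, σ j) * a (∑ j, σ' j) :=
    mul_le_mul (hca σ) (hca σ') (hc_prod σ') (ha _)
  have hqp : 0 < a (∑ j, σ j) * a (∑ j, σ' j) := by
    have hpos : ∀ ρ : ι → ℕ, 0 < a (∑ j, ρ j) → a (∑ j, ρ j) ≤ K * ∏ j, c j (ρ j) →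
        0 < ∏ j, c j (ρ j) := fun ρ h0 hK =>
      pos_of_mul_pos_right (h0.trans_le hK) (pos_of_mul_pos_left (h0.trans_le hK) (hc_prod ρ)).le
    calc 0 < (∏ j, c j (τ j)) * ∏ j, c j (τ' j) := mul_pos (hpos τ hn hnK) (hpos τ' hn' hn'K)
      _ = (∏ j, c j (σ j)) * ∏ j, c j (σ' j) := hprod.symm
      _ ≤ _ := hswap
  have hp : ∑ j, σ' j ≤ d := by
    by_contra! hp
    simp [hvanish _ hp] at hqp
  refine lt_irrefl (C * (a (∑ j, σ j) * a (∑ j, σ' j))) ?_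
  calc C * (a (∑ j, σ j) * a (∑ j, σ' j)) ≤ a (∑ j, τ j) * a (∑ j, τ' j) :=
        h.mul_le_mul_of_add_eq hC ha hσ hnn' (by simpa using hsum) hp
    _ ≤ (K * ∏ j, c j (τ j)) * (K * ∏ j, c j (τ' j)) :=
        mul_le_mul hnK hn'K hn'.le (hn.le.trans hnK)
    _ = K ^ 2 * ((∏ j, c j (σ j)) * ∏ j, c j (σ' j)) := by rw [hprod]; ring
    _ ≤ K ^ 2 * (a (∑ j, σ j) * a (∑ j, σ' j)) := mul_le_mul_of_nonneg_left hswap (sq_nonneg K)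
    _ < C * (a (∑ j, σ j) * a (∑ j, σ' j)) := by gcongr

theorem strictMonoOn {s : Set ℕ} {T : ℕ → ι → ℕ} (h : StronglyLogConcave C d a) (hC : 1 ≤ C)
    (ha : ∀ i, 0 ≤ a i) (hvanish : ∀ p, d < p → a p = 0) (hc : ∀ j v, 0 ≤ c j v)
    (hca : ∀ σ : ι → ℕ, ∏ j, c j (σ j) ≤ a (∑ j, σ j)) (hKC : K ^ 2 < C)
    (hT : ∀ n ∈ s, ∑ j, T n j = n ∧ 0 < a n ∧ a n ≤ K * ∏ j, c j (T n j)) :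
    StrictMonoOn T s := by
  intro n hn n' hn' hnn'
  obtain ⟨hsum, hpos, hle⟩ := hT n hn
  obtain ⟨hsum', hpos', hle'⟩ := hT n' hn'
  refine lt_of_le_of_ne ?_ fun heq => hnn'.ne (by rw [← hsum, ← hsum', heq])
  exact h.le_of_sum_le hC ha hvanish hc hca hKC hsum hpos hle hsum' hpos' hle' hnn'.le

end StronglyLogConcave

theorem sq_mul_pow_lt_pow {k m t d : ℕ} (hk : 0 < k) (hm : 0 < m) (ht : 0 < t)
    (hd : k * m * t < d) : (k * t ^ m) ^ 2 < d ^ (2 * d) := by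
  have hpos : 0 < k * m * t := by positivity
  have hkd : k < d := (Nat.le_of_dvd hpos ⟨m * t, by ring⟩).trans_lt hd
  have hmd : m < d := (Nat.le_of_dvd hpos ⟨k * t, by ring⟩).trans_lt hd
  have htd : t < d := (Nat.le_of_dvd hpos ⟨k * m, by ring⟩).trans_lt hd
  calc (k * t ^ m) ^ 2 < (d ^ d) ^ 2 := by
        gcongr
        calc k * t ^ m < d * d ^ m := by gcongr
          _ = d ^ (m + 1) := by ring
          _ ≤ d ^ d := Nat.pow_le_pow_right (by omega) hmd
    _ = d ^ (2 * d) := by ring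

/-- Theorem 1.2: if `f = Σ_{i<k} Π_{j<m} f_{i,j}` with `m ≥ 2`, each `f_{i,j}` with
nonnegative coefficients and at most `t` monomials, has degree `d` and satisfies the strong
log-concavity condition `a_i² > d^{2d}·a_{i-1}·a_{i+1}`, then `d ≤ k·m·t`. -/
theorem strong_logconcave_degree_bound (k m t d : ℕ) (hm : 2 ≤ m)
    (f : Polynomial ℝ) (hdeg : f.natDegree = d)
    (F : Fin k → Fin m → Polynomial ℝ)
    (hf : f = ∑ i : Fin k, ∏ j : Fin m, F i j)
    (hFnonneg : ∀ i j n, 0 ≤ (F i j).coeff n)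
    (ht : ∀ i j, (F i j).support.card ≤ t)
    (hnonneg : ∀ n, 0 ≤ f.coeff n)
    (hlc : ∀ i : ℕ, 1 ≤ i → i ≤ d - 1 →
      (f.coeff i) ^ 2 > (d : ℝ) ^ (2 * d) * (f.coeff (i - 1) * f.coeff (i + 1))) :
    d ≤ k * m * t := by
  by_contra! hlt
  have hC : 1 ≤ (d : ℝ) ^ (2 * d) := one_le_pow₀ (by exact_mod_cast (show 1 ≤ d by omega))
  have hslc : StronglyLogConcave ((d : ℝ) ^ (2 * d)) d f.coeff := fun i hi => by
    simpa using hlc (i + 1) (by omega) (by omega)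
  have hpos : ∀ n ∈ Icc 1 d, 0 < f.coeff n := fun n hn =>
    hslc.coeff_pos hdeg (by linarith) hnonneg hn
  have hwit : ∀ n ∈ Icc 1 d, ∃ i, ∃ τ ∈ Fintype.piFinset (fun j => (F i j).support),
      ∑ j, τ j = n ∧ f.coeff n ≤ k * t ^ m * ∏ j, (F i j).coeff (τ j) := fun n hn => by
    simpa [hf] using exists_coeff_sum_prod_le hFnonneg ht (hf ▸ hpos n hn)
  obtain ⟨i₀, τ₀, hτ₀, -⟩ := hwit d (mem_Icc.2 ⟨by omega, le_rfl⟩)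
  have : Nonempty (Fin k) := ⟨i₀⟩
  have : Nonempty (Fin m) := ⟨⟨0, by omega⟩⟩
  have ht₀ : 0 < t := (card_pos.2 ⟨_, Fintype.mem_piFinset.1 hτ₀ ⟨0, by omega⟩⟩).trans_le (ht _ _)
  have hKC : ((k : ℝ) * t ^ m) ^ 2 < (d : ℝ) ^ (2 * d) := by
    exact_mod_cast sq_mul_pow_lt_pow i₀.pos (by omega) ht₀ hlt
  choose! I T hTsupp hTsum hTle using hwit
  have hmono : ∀ i, StrictMonoOn T ((Icc 1 d).filter (I · = i)) := fun i =>
    hslc.strictMonoOn hC hnonneg (fun p hp => coeff_eq_zero_of_natDegree_lt (hdeg ▸ hp))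
      (hFnonneg i) (fun σ => hf ▸ prod_coeff_le_coeff_sum_prod hFnonneg i σ) hKC fun n hn => by
        obtain ⟨hnd, rfl⟩ := mem_filter.1 hn
        exact ⟨hTsum n hnd, hpos n hnd, hTle n hnd⟩
  refine hlt.not_ge ?_
  calc d = #(Icc 1 d) := by simp
    _ ≤ ∑ i, ∑ j, #(F i j).support :=
        card_le_sum_sum_card_of_fibers hmono fun n hn j => Fintype.mem_piFinset.1 (hTsupp n hn) j
    _ ≤ ∑ _i : Fin k, ∑ _j : Fin m, t := by gcongr with i _ j _; exact ht i j
    _ = k * m * t := by simp [mul_assoc]
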